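/- Let z² > 1 and let k* > 0 satisfy (1+k*)ln(1+k*) = z²k*. Then for all k with 0 < k < k*, BF(z,k) < 1, and for all k > k*, BF(z,k) > 1. -/

import Mathlib

/-
Taking logarithms, `BF z k < 1` iff `(1 + k) log (1 + k) < z² k`. The function
`k ↦ (1 + k) log (1 + k)` is strictly convex and vanishes at `0`, so its secant slope from the
origin, `(1 + k) log (1 + k) / k`, is strictly increasing on `k > 0`; the defining equation of `k*`
says that this slope equals `z²` exactly at `k*`.
-/

noncomputable def BF (z k : ℝ) : ℝ := Real.sqrt (1 + k) * Real.exp (-(z^2 * k) / (2 * (1 + k)))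

open Real Set

lemma strictConvexOn_one_add_mul_log_one_add :
    StrictConvexOn ℝ (Ici (-1)) (fun k : ℝ ↦ (1 + k) * log (1 + k)) := by
  have h := strictConvexOn_mul_log.translate_right 1
  rwa [show (fun k : ℝ ↦ 1 + k) ⁻¹' Ici 0 = Ici (-1) by ext; simp [neg_le_iff_add_nonneg']] at h

lemma strictMonoOn_one_add_mul_log_one_add_div_self :
    StrictMonoOn (fun k : ℝ ↦ (1 + k) * log (1 + k) / k) (Ioi 0) := by
  intro x hx y hy hxy
  have h := strictConvexOn_one_add_mul_log_one_add.secant_strict_mono (a := 0)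
    (by norm_num) (mem_Ici.2 (by linarith [mem_Ioi.1 hx])) (mem_Ici.2 (by linarith [mem_Ioi.1 hy]))
    (ne_of_gt hx) (ne_of_gt hy) hxy
  simpa using h

lemma BF_eq_exp {z k : ℝ} (hk : 0 < 1 + k) :
    BF z k = exp (((1 + k) * log (1 + k) - z ^ 2 * k) / (2 * (1 + k))) := by
  rw [BF, sqrt_eq_rpow, rpow_def_of_pos hk, ← exp_add]
  congr 1
  field_simp
  ring

lemma BF_lt_one_iff {z k : ℝ} (hk : 0 < 1 + k) :
    BF z k < 1 ↔ (1 + k) * log (1 + k) < z ^ 2 * k := by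
  rw [BF_eq_exp hk, exp_lt_one_iff, div_lt_iff₀ (by positivity), zero_mul, sub_neg]

lemma one_lt_BF_iff {z k : ℝ} (hk : 0 < 1 + k) :
    1 < BF z k ↔ z ^ 2 * k < (1 + k) * log (1 + k) := by
  rw [BF_eq_exp hk, one_lt_exp_iff, div_pos_iff_of_pos_right (by positivity), sub_pos]

theorem bf_flip_general (z kstar : ℝ) (hk : 0 < kstar)
    (hflip : (1 + kstar) * Real.log (1 + kstar) = z^2 * kstar) :
    (∀ k : ℝ, 0 < k → k < kstar → BF z k < 1) ∧
    (∀ k : ℝ, kstar < k → 1 < BF z k) := by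
  have hmono := strictMonoOn_one_add_mul_log_one_add_div_self
  have hstar : (1 + kstar) * log (1 + kstar) / kstar = z ^ 2 := by
    rw [hflip, mul_div_cancel_right₀ _ hk.ne']
  constructor
  · intro k hk0 hkk
    rw [BF_lt_one_iff (by linarith), ← div_lt_iff₀ hk0, ← hstar]
    exact hmono hk0 hk hkk
  · intro k hkk
    have hk0 : 0 < k := hk.trans hkk
    rw [one_lt_BF_iff (by linarith), ← lt_div_iff₀ hk0, ← hstar]
    exact hmono hk hk0 hkk

theorem bf_flip (z kstar : ℝ) (hz : 1 < z^2) (hk : 0 < kstar)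
    (hflip : (1 + kstar) * Real.log (1 + kstar) = z^2 * kstar) :
    (∀ k : ℝ, 0 < k → k < kstar → BF z k < 1) ∧
    (∀ k : ℝ, kstar < k → 1 < BF z k) :=
  bf_flip_general z kstar hk hflip
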